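/- arXiv:1711.05039 — 2 statements merged into one kernel-verified Lean document; each statement's English description precedes it below -/
import Mathlib

section
/- Consider the scalar ODE ż = b(t)z + p(t) with b, p continuous, suppose liminf_{t→∞}(1/t)∫₀ᵗ b(s)ds = μ > 0 and |p(t)| ≤ C e^{−at} with a > 0. If γ := ∫₀^∞ exp(−∫₀ˢ b(τ)dτ) p(s) ds is finite and z(0) + γ ≠ 0, then |z(t)| → ∞ as t → ∞. -/
/-!
Variation of constants writes the solution as
`z t = exp (B t) * (z 0 + ∫₀ᵗ exp (-B s) p s ds)` with `B t = ∫₀ᵗ b`.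
The second factor tends to `z 0 + γ ≠ 0`, while a positive lower Lyapunov exponent of `b`
makes `B t ≥ (μ / 2) t` eventually, so the first factor blows up.
-/

open MeasureTheory intervalIntegral Filter
open Topology

/-- On `ℝ`, a liminf that is not the junk value `sSup ∅ = 0` comes from a function that is
eventually bounded below. -/
lemma Real.isBoundedUnder_ge_of_liminf_ne_zero {α : Type*} {f : Filter α} {u : α → ℝ}
    (h : liminf u f ≠ 0) : f.IsBoundedUnder (· ≥ ·) u := by
  by_contra hu
  apply h
  have hempty : {x | ∀ᶠ t in f, x ≤ u t} = ∅ :=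
    Set.eq_empty_iff_forall_notMem.mpr fun x hx => hu ⟨x, hx⟩
  rw [liminf_eq, hempty, Real.sSup_empty]

lemma tendsto_atTop_of_liminf_div_pos {f : ℝ → ℝ}
    (hf : 0 < liminf (fun t => (1 / t) * f t) atTop) : Tendsto f atTop atTop := by
  set μ := liminf (fun t => (1 / t) * f t) atTop
  have hev : ∀ᶠ t in atTop, μ / 2 < (1 / t) * f t :=
    eventually_lt_of_lt_liminf (by linarith) (Real.isBoundedUnder_ge_of_liminf_ne_zero hf.ne')
  refine tendsto_atTop_mono' atTop ?_ (tendsto_id.const_mul_atTop (half_pos hf))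
  filter_upwards [hev, eventually_gt_atTop 0] with t ht htpos
  rw [one_div, inv_mul_eq_div, lt_div_iff₀ htpos] at ht
  exact ht.le

theorem eq_exp_integral_mul_of_hasDerivAt {b p z : ℝ → ℝ} (hb : Continuous b)
    (hp : Continuous p) (hz : ∀ t, HasDerivAt z (b t * z t + p t) t) (t : ℝ) :
    z t = Real.exp (∫ s in (0:ℝ)..t, b s) *
      (z 0 + ∫ s in (0:ℝ)..t, Real.exp (-∫ τ in (0:ℝ)..s, b τ) * p s) := by
  set B : ℝ → ℝ := fun t => ∫ s in (0:ℝ)..t, b s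
  have hB : ∀ t, HasDerivAt B (b t) t := fun t => (hb.integral_hasStrictDerivAt 0 t).hasDerivAt
  have hBc : Continuous B := continuous_iff_continuousAt.mpr fun t => (hB t).continuousAt
  have hderiv : ∀ s, HasDerivAt (fun s => Real.exp (-B s) * z s) (Real.exp (-B s) * p s) s := by
    intro s
    refine (((hB s).neg.exp).mul (hz s)).congr_deriv ?_
    simp only [Pi.neg_apply, B]
    ring
  have hFTC : ∫ s in (0:ℝ)..t, Real.exp (-B s) * p s = Real.exp (-B t) * z t - z 0 := by
    rw [integral_eq_sub_of_hasDerivAt (fun s _ => hderiv s)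
      (((Real.continuous_exp.comp hBc.neg).mul hp).intervalIntegrable _ _)]
    simp [B]
  rw [hFTC, add_sub_cancel, ← mul_assoc, ← Real.exp_add, add_neg_cancel, Real.exp_zero, one_mul]

theorem stmt16_general (b p z : ℝ → ℝ) (μ γ : ℝ)
    (hb : Continuous b) (hp : Continuous p)
    (hz : ∀ t, HasDerivAt z (b t * z t + p t) t)
    (hμ : Filter.liminf (fun t => (1 / t) * ∫ s in (0:ℝ)..t, b s) Filter.atTop = μ)
    (hμpos : 0 < μ)
    (hint : IntegrableOn
      (fun s => Real.exp (-∫ τ in (0:ℝ)..s, b τ) * p s) (Set.Ioi 0))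
    (hγ : γ = ∫ s in Set.Ioi (0:ℝ), Real.exp (-∫ τ in (0:ℝ)..s, b τ) * p s)
    (hz0 : z 0 + γ ≠ 0) :
    Filter.Tendsto (fun t => |z t|) Filter.atTop Filter.atTop := by
  have hexp : Tendsto (fun t => Real.exp (∫ s in (0:ℝ)..t, b s)) atTop atTop :=
    Real.tendsto_exp_atTop.comp (tendsto_atTop_of_liminf_div_pos (hμ ▸ hμpos))
  have hfactor : Tendsto
      (fun t => |z 0 + ∫ s in (0:ℝ)..t, Real.exp (-∫ τ in (0:ℝ)..s, b τ) * p s|)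
      atTop (𝓝 |z 0 + γ|) :=
    (tendsto_const_nhds.add (hγ ▸ intervalIntegral_tendsto_integral_Ioi 0 hint tendsto_id)).abs
  refine (hexp.atTop_mul_pos (abs_pos.mpr hz0) hfactor).congr fun t => ?_
  rw [eq_exp_integral_mul_of_hasDerivAt hb hp hz t, abs_mul, abs_of_pos (Real.exp_pos _)]

/-- For `ż = b(t)z + p(t)` with `liminf (1/t)∫₀ᵗ b = μ > 0` and exponentially
decaying forcing `|p(t)| ≤ C e^{−at}`, if `γ = ∫₀^∞ e^{−∫₀ˢ b} p(s) ds` is finite and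
`z(0) + γ ≠ 0`, then `|z(t)| → ∞`. -/
theorem stmt16 (b p z : ℝ → ℝ) (μ C a γ : ℝ)
    (hb : Continuous b) (hp : Continuous p)
    (hz : ∀ t, HasDerivAt z (b t * z t + p t) t)
    (hμ : Filter.liminf (fun t => (1 / t) * ∫ s in (0:ℝ)..t, b s) Filter.atTop = μ)
    (hμpos : 0 < μ)
    (ha : 0 < a) (hpdecay : ∀ t, 0 ≤ t → |p t| ≤ C * Real.exp (-a * t))
    (hint : IntegrableOn
      (fun s => Real.exp (-∫ τ in (0:ℝ)..s, b τ) * p s) (Set.Ioi 0))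
    (hγ : γ = ∫ s in Set.Ioi (0:ℝ), Real.exp (-∫ τ in (0:ℝ)..s, b τ) * p s)
    (hz0 : z 0 + γ ≠ 0) :
    Filter.Tendsto (fun t => |z t|) Filter.atTop Filter.atTop :=
  stmt16_general b p z μ γ hb hp hz hμ hμpos hint hγ hz0
end

section
/- Let B : [0,∞) → ℝ^{d×d} be continuous, bounded, and upper triangular, and suppose each diagonal average converges: λ_i := lim_{t→∞}(1/t)∫₀ᵗ B_{ii}(s)ds exists with λ_i < 0 for all i. Then every solution of ż = B(t)z converges to 0 exponentially: there exist a > 0 and C > 0 with ‖z(t)‖ ≤ C e^{−at}‖z(0)‖. -/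
open Matrix MeasureTheory intervalIntegral Filter

/-!
Write `Λᵢ(t) = ∫₀ᵗ Bᵢᵢ`. Convergence of `Λᵢ(t)/t` to `λᵢ < 0` gives, for small `ε > 0`,
a constant `c` with `Λᵢ(t) - Λᵢ(s) ≤ (λᵢ + ε) t - (λᵢ - ε) s + c` for all `s, t ≥ 0`.
By variation of constants, a scalar equation `ẋ = Bᵢᵢ(t) x + f(t)` whose forcing decays
like `e^{-bt}` then has solutions decaying like `e^{-rt}` for some `r > 0`. Since `B` is
upper triangular, the `i`-th component of `ż = B z` is such an equation with forcing
`∑_{j > i} Bᵢⱼ zⱼ`, which decays exponentially by downward induction on `i` because `B`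
is bounded.
-/

theorem exists_forall_le_add_of_eventually_le {f g : ℝ → ℝ} (hf : Continuous f)
    (hg : Continuous g) (h : ∀ᶠ t in atTop, f t ≤ g t) (t₀ : ℝ) :
    ∃ c, ∀ t, t₀ ≤ t → f t ≤ g t + c := by
  obtain ⟨T, hT⟩ := eventually_atTop.1 h
  obtain ⟨c, hc⟩ :=
    isCompact_Icc.bddAbove_image ((hf.sub hg).continuousOn (s := Set.Icc t₀ T))
  refine ⟨max c 0, fun t ht => ?_⟩
  rcases le_total t T with htT | hTt
  · have hbound : f t - g t ≤ c := hc ⟨t, ⟨ht, htT⟩, rfl⟩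
    linarith [le_max_left c 0]
  · linarith [hT t hTt, le_max_right c 0]

theorem exists_sub_le_of_tendsto_avg {A : ℝ → ℝ} {l ε : ℝ} (hA : Continuous A)
    (h : Tendsto (fun t => (1 / t) * A t) atTop (nhds l)) (hε : 0 < ε) :
    ∃ c, ∀ s t, 0 ≤ s → 0 ≤ t → A t - A s ≤ (l + ε) * t - (l - ε) * s + c := by
  have hnear : ∀ᶠ t in atTop, 0 < t ∧ (1 / t) * A t ∈ Set.Ioo (l - ε) (l + ε) :=
    (eventually_gt_atTop 0).and (h (Ioo_mem_nhds (by linarith) (by linarith)))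
  have hupper : ∀ᶠ t in atTop, A t ≤ (l + ε) * t := hnear.mono fun t ⟨ht, _, hlt⟩ => by
    rw [one_div, inv_mul_lt_iff₀ ht] at hlt; linarith
  have hlower : ∀ᶠ t in atTop, (l - ε) * t ≤ A t := hnear.mono fun t ⟨ht, hgt, _⟩ => by
    rw [one_div, lt_inv_mul_iff₀ ht] at hgt; linarith
  obtain ⟨c₁, hc₁⟩ := exists_forall_le_add_of_eventually_le hA (by fun_prop) hupper 0
  obtain ⟨c₂, hc₂⟩ := exists_forall_le_add_of_eventually_le (by fun_prop) hA hlower 0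
  exact ⟨c₁ + c₂, fun s t hs ht => by linarith [hc₁ t ht, hc₂ s hs]⟩

theorem mul_exp_neg_le {δ : ℝ} (hδ : 0 < δ) (t : ℝ) :
    t * Real.exp (-δ * t) ≤ 2 / δ * Real.exp (-(δ / 2) * t) := by
  have hlin : δ / 2 * t ≤ Real.exp (δ / 2 * t) := by linarith [Real.add_one_le_exp (δ / 2 * t)]
  calc t * Real.exp (-δ * t) = 2 / δ * (δ / 2 * t) * Real.exp (-δ * t) := by field_simp
    _ ≤ 2 / δ * Real.exp (δ / 2 * t) * Real.exp (-δ * t) := by gcongr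
    _ = 2 / δ * Real.exp (-(δ / 2) * t) := by rw [mul_assoc, ← Real.exp_add]; ring_nf

section VariationOfConstants

variable {a f x A : ℝ → ℝ}

theorem eq_exp_mul_add_integral (hA : ∀ t, HasDerivAt A (a t) t) (hf : Continuous f)
    (hx : ∀ t, HasDerivAt x (a t * x t + f t) t) (t : ℝ) :
    x t = Real.exp (A t - A 0) * x 0 + ∫ s in (0 : ℝ)..t, Real.exp (A t - A s) * f s := by
  have hAc : Continuous A := continuous_iff_continuousAt.2 fun t => (hA t).continuousAt
  have hderiv : ∀ s, HasDerivAt (fun u => Real.exp (A t - A u) * x u)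
      (Real.exp (A t - A s) * f s) s := fun s =>
    (((hA s).const_sub (A t)).exp.mul (hx s)).congr_deriv (by ring)
  have hcont : Continuous fun s => Real.exp (A t - A s) * f s := by fun_prop
  rw [integral_eq_sub_of_hasDerivAt (fun s _ => hderiv s) (hcont.intervalIntegrable _ _), sub_self,
    Real.exp_zero, one_mul]
  ring

theorem abs_le_exp_mul_add_mul (hA : ∀ t, HasDerivAt A (a t) t) (hf : Continuous f)
    (hx : ∀ t, HasDerivAt x (a t * x t + f t) t) {t L : ℝ} (ht : 0 ≤ t)
    (hL : ∀ s, 0 ≤ s → s ≤ t → Real.exp (A t - A s) * |f s| ≤ L) :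
    |x t| ≤ Real.exp (A t - A 0) * |x 0| + t * L := by
  have hint : ‖∫ s in (0 : ℝ)..t, Real.exp (A t - A s) * f s‖ ≤ L * |t - 0| := by
    refine intervalIntegral.norm_integral_le_of_norm_le_const fun s hs => ?_
    rw [Set.uIoc_of_le ht] at hs
    rw [Real.norm_eq_abs, abs_mul, Real.abs_exp]
    exact hL s hs.1.le hs.2
  rw [Real.norm_eq_abs, sub_zero, abs_of_nonneg ht] at hint
  rw [eq_exp_mul_add_integral hA hf hx t]
  calc _ ≤ |Real.exp (A t - A 0) * x 0| + |∫ s in (0 : ℝ)..t, Real.exp (A t - A s) * f s| :=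
        abs_add_le _ _
    _ ≤ _ := by rw [abs_mul, Real.abs_exp]; linarith

end VariationOfConstants

theorem exists_exp_decay_of_scalar_ode {a : ℝ → ℝ} {l b : ℝ} (ha : Continuous a)
    (hl : l < 0) (hav : Tendsto (fun t => (1 / t) * ∫ s in (0 : ℝ)..t, a s) atTop (nhds l))
    (hb : 0 < b) :
    ∃ r > 0, ∃ C > 0, ∀ (x f : ℝ → ℝ) (K : ℝ), Continuous f →
      (∀ t, HasDerivAt x (a t * x t + f t) t) →
      (∀ t, 0 ≤ t → |f t| ≤ K * Real.exp (-b * t)) →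
      ∀ t, 0 ≤ t → |x t| ≤ C * (|x 0| + K) * Real.exp (-r * t) := by
  set A : ℝ → ℝ := fun t => ∫ s in (0 : ℝ)..t, a s
  have hA : ∀ t, HasDerivAt A (a t) t := fun t => (ha.integral_hasStrictDerivAt 0 t).hasDerivAt
  have hAc : Continuous A := continuous_iff_continuousAt.2 fun t => (hA t).continuousAt
  set δ := min (-l / 2) (b / 2)
  have hδ : 0 < δ := lt_min (by linarith) (by linarith)
  obtain ⟨c, hc⟩ := exists_sub_le_of_tendsto_avg hAc hav (half_pos hδ)
  -- with `ε = δ / 2`, both `l + ε ≤ -δ` and `2 * ε - b ≤ -δ`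
  have hkernel : ∀ s t, 0 ≤ s → s ≤ t → A t - A s - b * s ≤ c - δ * t := by
    intro s t hs hst
    have h₁ : δ ≤ -l / 2 := min_le_left _ _
    have h₂ : δ ≤ b / 2 := min_le_right _ _
    nlinarith [hc s t hs (hs.trans hst)]
  refine ⟨δ / 2, half_pos hδ, Real.exp c * (1 + 2 / δ), by positivity,
    fun x f K hf hx hfK t ht => ?_⟩
  have hK : 0 ≤ K := by simpa using (abs_nonneg _).trans (hfK 0 le_rfl)
  have hforced : ∀ s, 0 ≤ s → s ≤ t →
      Real.exp (A t - A s) * |f s| ≤ Real.exp c * K * Real.exp (-δ * t) := by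
    intro s hs hst
    calc Real.exp (A t - A s) * |f s| ≤ Real.exp (A t - A s) * (K * Real.exp (-b * s)) := by
          gcongr; exact hfK s hs
      _ = K * Real.exp (A t - A s - b * s) := by
          rw [show A t - A s - b * s = (A t - A s) + -b * s by ring, Real.exp_add]; ring
      _ ≤ K * Real.exp (c - δ * t) := by gcongr K * Real.exp ?_; exact hkernel s t hs hst
      _ = Real.exp c * K * Real.exp (-δ * t) := by
          rw [show c - δ * t = c + -δ * t by ring, Real.exp_add]; ring
  have hfree : Real.exp (A t - A 0) ≤ Real.exp c * Real.exp (-(δ / 2) * t) := by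
    rw [← Real.exp_add]
    gcongr
    nlinarith [hkernel 0 t le_rfl ht]
  have hslack : 0 ≤ Real.exp c * Real.exp (-(δ / 2) * t) * (K + 2 / δ * |x 0|) := by positivity
  calc |x t| ≤ Real.exp (A t - A 0) * |x 0| + t * (Real.exp c * K * Real.exp (-δ * t)) :=
        abs_le_exp_mul_add_mul hA hf hx ht hforced
    _ = Real.exp (A t - A 0) * |x 0| + Real.exp c * K * (t * Real.exp (-δ * t)) := by ring
    _ ≤ Real.exp c * Real.exp (-(δ / 2) * t) * |x 0|
          + Real.exp c * K * (2 / δ * Real.exp (-(δ / 2) * t)) := by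
        gcongr ?_ * _ + _ * ?_
        exact mul_exp_neg_le hδ t
    _ ≤ Real.exp c * (1 + 2 / δ) * (|x 0| + K) * Real.exp (-(δ / 2) * t) := by
        linarith [hslack]

theorem Matrix.BlockTriangular.mulVec_apply_eq_add_sum_Ioi {ι R : Type*} [Fintype ι]
    [LinearOrder ι] [LocallyFiniteOrderTop ι] [NonUnitalNonAssocSemiring R] {A : Matrix ι ι R}
    (hA : A.BlockTriangular id) (v : ι → R) (i : ι) :
    (A *ᵥ v) i = A i i * v i + ∑ j ∈ Finset.Ioi i, A i j * v j := by
  simp only [mulVec, dotProduct]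
  rw [← Finset.sum_subset (Finset.subset_univ (Finset.Ici i)), ← Finset.sum_Ioi_add_eq_sum_Ici,
    add_comm]
  intro j _ hj
  rw [hA (show j < i from not_le.1 (by simpa using hj)), zero_mul]

section TriangularSystem

variable {ι : Type*} [Fintype ι] {B : ℝ → Matrix ι ι ℝ}

def ComponentDecaysAt (B : ℝ → Matrix ι ι ℝ) (r C : ℝ) (i : ι) : Prop :=
  ∀ z : ℝ → ι → ℝ, (∀ t, HasDerivAt z (B t *ᵥ z t) t) →
    ∀ t, 0 ≤ t → |z t i| ≤ C * Real.exp (-r * t) * ‖z 0‖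

theorem ComponentDecaysAt.mono {r r' C C' : ℝ} {i : ι} (h : ComponentDecaysAt B r C i)
    (hr : r' ≤ r) (hC : C ≤ C') (hC' : 0 ≤ C') : ComponentDecaysAt B r' C' i :=
  fun z hz t ht => (h z hz t ht).trans <| by gcongr

theorem exists_forall_componentDecaysAt (s : Finset ι)
    (h : ∀ i ∈ s, ∃ r > 0, ∃ C > 0, ComponentDecaysAt B r C i) :
    ∃ r > 0, ∃ C > 0, ∀ i ∈ s, ComponentDecaysAt B r C i := by
  classical
  induction s using Finset.induction_on with
  | empty => exact ⟨1, one_pos, 1, one_pos, by simp⟩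
  | insert i s _ ih =>
    obtain ⟨r, hr, C, hC, hdecay⟩ := ih fun j hj => h j (Finset.mem_insert_of_mem hj)
    obtain ⟨r', hr', C', hC', hdecay'⟩ := h i (Finset.mem_insert_self i s)
    have hmax : 0 ≤ max C C' := hC.le.trans (le_max_left C C')
    refine ⟨min r r', lt_min hr hr', max C C', hC.trans_le (le_max_left C C'), fun j hj => ?_⟩
    rcases Finset.mem_insert.1 hj with rfl | hj
    · exact hdecay'.mono (min_le_right r r') (le_max_right C C') hmax
    · exact (hdecay j hj).mono (min_le_left r r') (le_max_left C C') hmax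

variable [LinearOrder ι] [LocallyFiniteOrderTop ι]

theorem exists_componentDecaysAt_of_forall_Ioi (hB : Continuous B) {M : ℝ}
    (hbdd : ∀ t i j, |B t i j| ≤ M) (htri : ∀ t, (B t).BlockTriangular id) {i : ι} {l : ℝ}
    (hl : l < 0) (hav : Tendsto (fun t => (1 / t) * ∫ s in (0 : ℝ)..t, B s i i) atTop (nhds l))
    {r C : ℝ} (hr : 0 < r) (hC : 0 ≤ C)
    (hIoi : ∀ j ∈ Finset.Ioi i, ComponentDecaysAt B r C j) :
    ∃ r' > 0, ∃ C' > 0, ComponentDecaysAt B r' C' i := by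
  obtain ⟨r', hr', C', hC', hscalar⟩ :=
    exists_exp_decay_of_scalar_ode (hB.matrix_elem i i) hl hav hr
  have hM : 0 ≤ M := (abs_nonneg _).trans (hbdd 0 i i)
  set k : ℝ := (Finset.Ioi i).card * M * C
  refine ⟨r', hr', C' * (1 + k), by positivity, fun z hz t ht => ?_⟩
  have hzc : Continuous z := continuous_iff_continuousAt.2 fun t => (hz t).continuousAt
  set f : ℝ → ℝ := fun u => ∑ j ∈ Finset.Ioi i, B u i j * z u j
  have hf : Continuous f :=
    continuous_finsetSum _ fun j _ => (hB.matrix_elem i j).mul ((continuous_apply j).comp hzc)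
  have hzi : ∀ u, HasDerivAt (fun v => z v i) (B u i i * z u i + f u) u := fun u => by
    rw [← (htri u).mulVec_apply_eq_add_sum_Ioi]
    exact hasDerivAt_pi.1 (hz u) i
  have hfK : ∀ u, 0 ≤ u → |f u| ≤ k * ‖z 0‖ * Real.exp (-r * u) := fun u hu => by
    calc |f u| ≤ ∑ j ∈ Finset.Ioi i, |B u i j| * |z u j| := by
          simpa only [abs_mul] using
            Finset.abs_sum_le_sum_abs (fun j => B u i j * z u j) (Finset.Ioi i)
      _ ≤ (Finset.Ioi i).card • (M * (C * Real.exp (-r * u) * ‖z 0‖)) :=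
          Finset.sum_le_card_nsmul _ _ _ fun j hj => mul_le_mul (hbdd u i j)
            (hIoi j hj z hz u hu) (abs_nonneg _) ((abs_nonneg _).trans (hbdd u i j))
      _ = k * ‖z 0‖ * Real.exp (-r * u) := by rw [nsmul_eq_mul]; ring
  have hz0 : |z 0 i| ≤ ‖z 0‖ := by simpa using norm_le_pi_norm (z 0) i
  calc |z t i| ≤ C' * (|z 0 i| + k * ‖z 0‖) * Real.exp (-r' * t) :=
        hscalar _ _ _ hf hzi hfK t ht
    _ ≤ C' * (‖z 0‖ + k * ‖z 0‖) * Real.exp (-r' * t) := by gcongr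
    _ = C' * (1 + k) * Real.exp (-r' * t) * ‖z 0‖ := by ring

end TriangularSystem

/-- For an upper-triangular continuous bounded `B(t)` whose diagonal averages
converge to negative limits, every solution of `ż = B(t)z` decays exponentially:
there exist `a > 0`, `C > 0` with `‖z(t)‖ ≤ C e^{−at} ‖z(0)‖`. -/
theorem stmt19 {d : ℕ} (B : ℝ → Matrix (Fin d) (Fin d) ℝ)
    (hB : Continuous B) (M : ℝ) (hbdd : ∀ t i j, |B t i j| ≤ M)
    (htri : ∀ t, (B t).BlockTriangular id)
    (hdiag : ∀ i, ∃ l : ℝ, l < 0 ∧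
      Filter.Tendsto (fun t => (1 / t) * ∫ s in (0:ℝ)..t, B s i i)
        Filter.atTop (nhds l)) :
    ∃ a > 0, ∃ C > 0, ∀ z : ℝ → Fin d → ℝ,
      (∀ t, HasDerivAt z ((B t).mulVec (z t)) t) →
        ∀ t, 0 ≤ t → ‖z t‖ ≤ C * Real.exp (-a * t) * ‖z 0‖ := by
  have hcomponent : ∀ i, ∃ r > 0, ∃ C > 0, ComponentDecaysAt B r C i := fun i => by
    induction i using WellFoundedGT.induction with
    | _ i ih =>
      obtain ⟨l, hl, hav⟩ := hdiag i
      obtain ⟨r, hr, C, hC, hdecay⟩ :=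
        exists_forall_componentDecaysAt (Finset.Ioi i) fun j hj => ih j (Finset.mem_Ioi.1 hj)
      exact exists_componentDecaysAt_of_forall_Ioi hB hbdd htri hl hav hr hC.le hdecay
  obtain ⟨r, hr, C, hC, hdecay⟩ :=
    exists_forall_componentDecaysAt Finset.univ fun i _ => hcomponent i
  refine ⟨r, hr, C, hC, fun z hz t ht => ?_⟩
  exact (pi_norm_le_iff_of_nonneg (by positivity)).2 fun i =>
    hdecay i (Finset.mem_univ i) z hz t ht
end
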